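/- Fix positive integers K, N and i ∈ {1,…,K}, and let G_i be the subgraph of the enhanced conflict graph G_{K,N} induced by all broadcast vertices together with the unicast vertices u_{ij} (j ∈ {1,…,N}) from input i. Then G_i contains no induced cycle of odd length at least 5 (no odd hole). -/

import Mathlib

open SimpleGraph Pointwise

/-- Vertex set of the enhanced conflict graph `G_{K,N}`: `(false, i, j)` is the unicast vertex
`u_{ij}` (input `i`, output `j`), and `(true, i, j)` is the broadcast (subflow) vertex `b_{ij}`. -/
abbrev CGVert (K N : ℕ) := Bool × Fin K × Fin N

/-- The enhanced conflict graph `G_{K,N}` of a `K × N` switch with unicast and broadcast traffic: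
two distinct vertices are adjacent iff they share an input and at least one of them is a unicast,
or they share an output and come from different inputs. -/
def ECG (K N : ℕ) : SimpleGraph (CGVert K N) where
  Adj v w := v ≠ w ∧
    ((v.2.1 = w.2.1 ∧ (v.1 = false ∨ w.1 = false)) ∨
     (v.2.2 = w.2.2 ∧ v.2.1 ≠ w.2.1))
  symm := by
    constructor
    rintro v w ⟨hne, h⟩
    refine ⟨hne.symm, ?_⟩
    rcases h with ⟨h1, h2⟩ | ⟨h1, h2⟩
    · exact Or.inl ⟨h1.symm, h2.symm⟩
    · exact Or.inr ⟨h1.symm, h2.symm⟩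
  loopless := ⟨fun v h => h.1 rfl⟩

/-- The stable set polytope of a graph: the convex hull of the 0/1 indicator vectors of the
independent (stable) sets. -/
def STAB {V : Type*} (G : SimpleGraph V) : Set (V → ℝ) :=
  convexHull ℝ {x | ∃ S : Set V, (∀ v ∈ S, ∀ w ∈ S, ¬ G.Adj v w) ∧
    x = S.indicator (fun _ => (1 : ℝ))}

/-- The fractional stable set polytope of a graph: nonnegative vectors whose sum over every
clique is at most `1`. -/
def QSTAB {V : Type*} (G : SimpleGraph V) : Set (V → ℝ) :=
  {x | (∀ v, 0 ≤ x v) ∧ ∀ Q : Finset V, G.IsClique (Q : Set V) → ∑ v ∈ Q, x v ≤ 1}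

/-- A graph is perfect if every induced subgraph has chromatic number equal to its clique
number. -/
def SimpleGraph.IsPerfect {V : Type*} (G : SimpleGraph V) : Prop :=
  ∀ S : Set V, (G.induce S).chromaticNumber = ((G.induce S).cliqueNum : ℕ∞)

/-- A graph has an odd hole if some induced subgraph is a chordless cycle of odd length at
least 5. -/
def SimpleGraph.HasOddHole {V : Type*} (G : SimpleGraph V) : Prop :=
  ∃ (n : ℕ) (S : Set V), 5 ≤ n ∧ Odd n ∧ Nonempty (G.induce S ≃g cycleGraph n)

/-!
Every vertex `v` of a hole in `G_i` is the middle of an induced path `u - v - w`. A broadcast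
vertex from an input other than `i` meets the rest of `G_i` only through its output, so `u` and
`w` would share that output and be adjacent; hence every vertex of the hole comes from input `i`.
Within one input, the unicast vertices are adjacent to everything and the broadcast vertices to
nothing, so the non-neighbours `v` and `v + 2` on the hole are both broadcast vertices. But then
two consecutive vertices of the hole are broadcast vertices of input `i`, which are nonadjacent.
The argument excludes all holes of length at least `4`, not only the odd ones.
-/

lemma Fin.self_ne_add_two {k : ℕ} (a : Fin (k + 3)) : a ≠ a + 2 := by
  simp [Fin.ext_iff, Nat.mod_eq_of_lt (show 2 < k + 3 by omega)]

namespace SimpleGraph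

lemma cycleGraph_adj_add_one {k : ℕ} (a : Fin (k + 2)) : (cycleGraph (k + 2)).Adj a (a + 1) :=
  cycleGraph_adj.mpr (Or.inr (add_sub_cancel_left a 1))

lemma cycleGraph_not_adj_add_two {k : ℕ} (a : Fin (k + 4)) :
    ¬ (cycleGraph (k + 4)).Adj a (a + 2) := by
  rw [cycleGraph_adj, add_sub_cancel_left, sub_add_cancel_left]
  simp [Fin.ext_iff, Fin.val_neg', Nat.mod_eq_of_lt (show 1 < k + 4 by omega),
    Nat.mod_eq_of_lt (show 2 < k + 4 by omega), Nat.mod_eq_of_lt (show k + 2 < k + 2 + 2 by omega)]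

end SimpleGraph

namespace ECG

variable {K N : ℕ} {i : Fin K} {u v w : CGVert K N}

lemma adj_of_output_eq (hne : v ≠ w) (h : v.2.2 = w.2.2) : (ECG K N).Adj v w := by
  refine ⟨hne, ?_⟩
  by_cases hin : v.2.1 = w.2.1
  · refine Or.inl ⟨hin, ?_⟩
    by_contra! hb
    simp only [ne_eq, Bool.not_eq_false] at hb
    exact hne (Prod.ext (hb.1.trans hb.2.symm) (Prod.ext hin h))
  · exact Or.inr ⟨h, hin⟩

lemma output_eq_of_adj (hv : v.1 = true) (hvi : v.2.1 ≠ i) (hw : w.1 = true ∨ w.2.1 = i)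
    (h : (ECG K N).Adj v w) : v.2.2 = w.2.2 := by
  rcases h.2 with ⟨hin, hb⟩ | ⟨hout, -⟩
  · rcases hw with hw | hw
    · simp [hv, hw] at hb
    · exact absurd (hin.trans hw) hvi
  · exact hout

lemma input_eq_of_adj_of_adj (hu : u.1 = true ∨ u.2.1 = i) (hv : v.1 = true ∨ v.2.1 = i)
    (hw : w.1 = true ∨ w.2.1 = i) (huw : u ≠ w) (hnuw : ¬ (ECG K N).Adj u w)
    (hvu : (ECG K N).Adj v u) (hvw : (ECG K N).Adj v w) : v.2.1 = i := by
  by_contra hvi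
  have hvb : v.1 = true := hv.resolve_right hvi
  exact hnuw (adj_of_output_eq huw
    ((output_eq_of_adj hvb hvi hu hvu).symm.trans (output_eq_of_adj hvb hvi hw hvw)))

lemma fst_eq_true_of_not_adj (hin : v.2.1 = w.2.1) (hne : v ≠ w) (h : ¬ (ECG K N).Adj v w) :
    v.1 = true := by
  by_contra hv
  exact h ⟨hne, Or.inl ⟨hin, Or.inl (by simpa using hv)⟩⟩

lemma not_adj_of_fst_eq_true (hv : v.1 = true) (hw : w.1 = true) (hin : v.2.1 = w.2.1) :
    ¬ (ECG K N).Adj v w := by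
  rintro ⟨-, ⟨-, hb⟩ | ⟨-, hin'⟩⟩
  · simp [hv, hw] at hb
  · exact hin' hin

theorem isEmpty_cycleGraph_embedding (k : ℕ) :
    IsEmpty (cycleGraph (k + 4) ↪g
      (ECG K N).induce {v : CGVert K N | v.1 = true ∨ v.2.1 = i}) := by
  refine ⟨fun φ => ?_⟩
  let f : Fin (k + 4) → CGVert K N := fun a => φ a
  have hmem (a) : (f a).1 = true ∨ (f a).2.1 = i := (φ a).2
  have hadj (a : Fin (k + 4)) : (ECG K N).Adj (f a) (f (a + 1)) :=
    φ.map_adj_iff.mpr (cycleGraph_adj_add_one a)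
  have hne (a : Fin (k + 4)) : f a ≠ f (a + 2) :=
    fun h => Fin.self_ne_add_two a (φ.injective (Subtype.ext h))
  have hnadj (a : Fin (k + 4)) : ¬ (ECG K N).Adj (f a) (f (a + 2)) :=
    fun h => cycleGraph_not_adj_add_two a (φ.map_adj_iff.mp h)
  have hinput (a) : (f a).2.1 = i := by
    have key (b : Fin (k + 4)) : (f (b + 1)).2.1 = i := by
      have hnext := hadj (b + 1)
      rw [add_assoc] at hnext
      exact input_eq_of_adj_of_adj (hmem b) (hmem _) (hmem _) (hne b) (hnadj b) (hadj b).symm hnext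
    simpa using key (a - 1)
  have hbroadcast (a) : (f a).1 = true :=
    fst_eq_true_of_not_adj ((hinput a).trans (hinput _).symm) (hne a) (hnadj a)
  exact not_adj_of_fst_eq_true (hbroadcast 0) (hbroadcast 1)
    ((hinput 0).trans (hinput 1).symm) (hadj 0)

end ECG

theorem stmt10_general (K N : ℕ) (i : Fin K) :
    ¬ ((ECG K N).induce {v : CGVert K N | v.1 = true ∨ v.2.1 = i}).HasOddHole := by
  rintro ⟨n, S, hn, -, ⟨e⟩⟩
  obtain ⟨k, rfl⟩ := Nat.exists_eq_add_of_le' (show 4 ≤ n by omega)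
  exact (ECG.isEmpty_cycleGraph_embedding k).false
    (e.symm.toEmbedding.trans (Embedding.induce S))

theorem stmt10 (K N : ℕ) (hK : 0 < K) (hN : 0 < N) (i : Fin K) :
    ¬ ((ECG K N).induce {v : CGVert K N | v.1 = true ∨ v.2.1 = i}).HasOddHole :=
  stmt10_general K N i
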